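/- Fix a positive integer k, a constant c > 0, and a sequence α_n > 0 with α_n n^{−1/4} → 0. If f is a real-valued function on k-tuples of configurations σ^(1),…,σ^(k) ∈ {−1,+1}^n with |f(σ^(1),…,σ^(k))| ≤ c α_n² q_max, where q_max = max_{i≠j} |q(σ^(i),σ^(j))|, then 2^{−nk} Σ_{σ^(1),…,σ^(k)} exp(f(σ^(1),…,σ^(k))) = 1 + o(1) as n → ∞. -/

import Mathlib

/-!
Replacing `σ^(j)` by the coordinatewise product `σ^(i) σ^(j)` is a bijection of the `k`-tuples,
so under the uniform measure the overlap `q(σ^(i), σ^(j))` is distributed like `m / n`, where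
`m = ∑_s τ_s` is the magnetization of one uniform configuration. Its moments are explicit:
`E cosh (t m) = cosh t ^ n ≤ exp (n t² / 2)` and `E |m| ≤ √(E m²) = √n`. Since
`|f| ≤ s q_max` with `s = c α_n²`, and `exp (± s q_max)` differ from `1` by at most a sum over the
pairs `i ≠ j`, the average of `exp f` is within `k² (2 (exp (u² / 2) - 1) + u)` of `1`, where
`u = s / √n = c (α_n n^{-1/4})² → 0`.
-/

open Finset Filter

/-- The map sending a Boolean to the spin value `±1`. -/
noncomputable def spin (b : Bool) : ℝ := if b then 1 else -1

/-- The overlap `q(σ,σ') = (1/n) ∑_s σ_s σ'_s` of two spin configurations. -/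
noncomputable def overlap {n : ℕ} (σ τ : Fin n → Bool) : ℝ :=
  (n : ℝ)⁻¹ * ∑ s, spin (σ s) * spin (τ s)

/-- The maximal off-diagonal overlap `q_max = max_{i≠j} |q_{ij}|` of a `k`-tuple of
spin configurations (equal to `0` when `k = 1`). -/
noncomputable def qmax {k n : ℕ} (σ : Fin k → Fin n → Bool) : ℝ :=
  ((Finset.univ : Finset (Fin k)).offDiag.sup
    fun p => Real.toNNReal |overlap (σ p.1) (σ p.2)| : NNReal)

open scoped BigOperators Topology
open Real

section Expect

variable {ι F K : Type*} [Fintype ι] [DecidableEq ι] [Fintype F] [Semifield K] [CharZero K]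

theorem Fintype.expect_prod_apply (φ : ι → F → K) :
    𝔼 τ : ι → F, ∏ i, φ i (τ i) = ∏ i, 𝔼 x, φ i x := by
  simp only [Fintype.expect_eq_sum_div_card, ← Fintype.prod_sum, Fintype.card_pi,
    prod_div_distrib, prod_const, card_univ, Nat.cast_pow]

theorem Fintype.expect_comp_eval [Nonempty F] (j : ι) (H : F → K) :
    𝔼 σ : ι → F, H (σ j) = 𝔼 x, H x := by
  calc 𝔼 σ : ι → F, H (σ j) = 𝔼 σ : ι → F, ∏ i, (if i = j then H (σ i) else 1) := by
        simp only [prod_ite_eq']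
    _ = ∏ i, 𝔼 x, (if i = j then H x else 1) :=
        Fintype.expect_prod_apply fun i x => if i = j then H x else 1
    _ = 𝔼 x, H x := by
        rw [Fintype.prod_eq_single j fun i hi => by simp only [if_neg hi, Fintype.expect_one]]
        simp only [if_true]

end Expect

theorem spin_mul_spin (a b : Bool) : spin a * spin b = spin (a == b) := by
  cases a <;> cases b <;> simp [spin]

theorem expect_spin : 𝔼 b, spin b = 0 := by
  rw [Fintype.expect_eq_sum_div_card]
  simp [spin]

theorem expect_exp_mul_spin (t : ℝ) : 𝔼 b, exp (t * spin b) = cosh t := by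
  rw [Fintype.expect_eq_sum_div_card, cosh_eq]
  simp [spin]

noncomputable def magnetization {n : ℕ} (τ : Fin n → Bool) : ℝ := ∑ s, spin (τ s)

section Magnetization

variable {n : ℕ}

theorem expect_exp_mul_magnetization (t : ℝ) :
    𝔼 τ : Fin n → Bool, exp (t * magnetization τ) = cosh t ^ n := by
  simp only [magnetization, mul_sum, exp_sum]
  rw [Fintype.expect_prod_apply fun _ b => exp (t * spin b)]
  simp only [expect_exp_mul_spin, prod_const, card_univ, Fintype.card_fin]

theorem expect_cosh_mul_magnetization (t : ℝ) :
    𝔼 τ : Fin n → Bool, cosh (t * magnetization τ) = cosh t ^ n := by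
  calc 𝔼 τ : Fin n → Bool, cosh (t * magnetization τ)
      = (𝔼 τ : Fin n → Bool, exp (t * magnetization τ)
          + 𝔼 τ : Fin n → Bool, exp (-t * magnetization τ)) / 2 := by
        simp only [cosh_eq, neg_mul, ← expect_add_distrib, expect_div]
    _ = cosh t ^ n := by
        rw [expect_exp_mul_magnetization, expect_exp_mul_magnetization, cosh_neg, add_self_div_two]

theorem expect_spin_mul_spin (s t : Fin n) :
    𝔼 τ : Fin n → Bool, spin (τ s) * spin (τ t) = if s = t then 1 else 0 := by
  split_ifs with hst
  · simp only [hst, spin_mul_spin, beq_self_eq_true, Fintype.expect_const]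
    exact if_pos rfl
  · have h := Fintype.expect_prod_apply
      fun u b => (if u = s then spin b else 1) * (if u = t then spin b else 1)
    simp only [prod_mul_distrib, prod_ite_eq', mem_univ, if_true] at h
    rw [h]
    exact prod_eq_zero (mem_univ s) (by simp only [if_true, if_neg hst, mul_one, expect_spin])

theorem expect_magnetization_sq : 𝔼 τ : Fin n → Bool, magnetization τ ^ 2 = n := by
  simp only [magnetization, sq, sum_mul_sum, expect_sum_comm, expect_spin_mul_spin]
  simp

theorem expect_abs_magnetization_le : 𝔼 τ : Fin n → Bool, |magnetization τ| ≤ √n := by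
  have h := expect_mul_sq_le_sq_mul_sq univ (fun τ : Fin n → Bool => |magnetization τ|) 1
  simp only [Pi.one_apply, mul_one, one_pow, sq_abs, expect_magnetization_sq,
    Fintype.expect_one] at h
  exact le_sqrt_of_sq_le h

end Magnetization

theorem overlap_eq_magnetization {n : ℕ} (σ τ : Fin n → Bool) :
    overlap σ τ = (n : ℝ)⁻¹ * magnetization fun s => σ s == τ s := by
  simp only [overlap, magnetization, spin_mul_spin]

section Overlap

variable {k n : ℕ} {i j : Fin k}

theorem expect_comp_overlap (hij : i ≠ j) (G : ℝ → ℝ) :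
    𝔼 σ : Fin k → Fin n → Bool, G (overlap (σ i) (σ j))
      = 𝔼 τ : Fin n → Bool, G ((n : ℝ)⁻¹ * magnetization τ) := by
  let gauge (σ : Fin k → Fin n → Bool) : Fin k → Fin n → Bool :=
    Function.update σ j fun s => σ i s == σ j s
  have gauge_i (σ) : gauge σ i = σ i := Function.update_of_ne hij ..
  have gauge_j (σ) : gauge σ j = fun s => σ i s == σ j s := Function.update_self ..
  have gauge_involutive : Function.Involutive gauge := by
    intro σ
    ext l s
    rcases eq_or_ne l j with rfl | hl
    · simp [gauge_i, gauge_j]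
    · simp [gauge, Function.update_of_ne hl]
  rw [← Fintype.expect_comp_eval j fun τ => G ((n : ℝ)⁻¹ * magnetization τ)]
  exact Fintype.expect_bijective gauge gauge_involutive.bijective _ _ fun σ => by
    rw [gauge_j, overlap_eq_magnetization]

theorem expect_abs_overlap_le (hij : i ≠ j) :
    𝔼 σ : Fin k → Fin n → Bool, |overlap (σ i) (σ j)| ≤ (√n)⁻¹ := by
  rw [expect_comp_overlap hij abs]
  simp only [abs_mul, abs_inv, Nat.abs_cast, ← mul_expect]
  calc (n : ℝ)⁻¹ * 𝔼 τ : Fin n → Bool, |magnetization τ| ≤ (n : ℝ)⁻¹ * √n := by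
        gcongr
        exact expect_abs_magnetization_le
    _ = (√n)⁻¹ := by rw [inv_mul_eq_div, sqrt_div_self', one_div]

theorem expect_cosh_mul_overlap_le (hij : i ≠ j) (t : ℝ) :
    𝔼 σ : Fin k → Fin n → Bool, cosh (t * overlap (σ i) (σ j)) ≤ exp ((t / √n) ^ 2 / 2) := by
  rw [expect_comp_overlap hij fun x => cosh (t * x)]
  simp only [← mul_assoc, expect_cosh_mul_magnetization]
  calc cosh (t * (n : ℝ)⁻¹) ^ n ≤ exp ((t * (n : ℝ)⁻¹) ^ 2 / 2) ^ n := by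
        gcongr
        exact cosh_le_exp_half_sq _
    _ = exp ((t / √n) ^ 2 / 2) := by
        rw [← exp_nat_mul, div_pow, sq_sqrt n.cast_nonneg]
        rcases eq_or_ne (n : ℝ) 0 with hn | hn
        · simp [hn]
        · field_simp

end Overlap

section Qmax

variable {k n : ℕ}

theorem qmax_eq_zero_or_exists (σ : Fin k → Fin n → Bool) :
    qmax σ = 0 ∨ ∃ p ∈ (univ : Finset (Fin k)).offDiag, qmax σ = |overlap (σ p.1) (σ p.2)| := by
  rcases (univ : Finset (Fin k)).offDiag.eq_empty_or_nonempty with hP | hP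
  · left
    simp [qmax, hP]
  · right
    obtain ⟨p, hp, hsup⟩ := exists_mem_eq_sup _ hP
      fun p : Fin k × Fin k => Real.toNNReal |overlap (σ p.1) (σ p.2)|
    exact ⟨p, hp, by rw [qmax, hsup, Real.coe_toNNReal _ (abs_nonneg _)]⟩

theorem Monotone.map_qmax_sub_le_sum {φ : ℝ → ℝ} (hφ : Monotone φ) (σ : Fin k → Fin n → Bool) :
    φ (qmax σ) - φ 0 ≤
      ∑ p ∈ (univ : Finset (Fin k)).offDiag, (φ |overlap (σ p.1) (σ p.2)| - φ 0) := by
  have h_nonneg (p : Fin k × Fin k) : 0 ≤ φ |overlap (σ p.1) (σ p.2)| - φ 0 :=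
    sub_nonneg.2 (hφ (abs_nonneg _))
  rcases qmax_eq_zero_or_exists σ with h | ⟨p, hp, h⟩
  · rw [h, sub_self]
    exact sum_nonneg fun p _ => h_nonneg p
  · rw [h]
    exact single_le_sum (fun p _ => h_nonneg p) hp

end Qmax

theorem exp_abs_sub_one_le (x : ℝ) : exp |x| - 1 ≤ 2 * (cosh x - 1) + |x| := by
  rw [← cosh_abs, cosh_eq]
  linarith [add_one_le_exp (-|x|)]

section ExpectExp

variable {k n : ℕ} {s : ℝ} {g : (Fin k → Fin n → Bool) → ℝ}

theorem one_sub_le_expect_exp (hs : 0 ≤ s) (hg : ∀ σ, |g σ| ≤ s * qmax σ) :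
    1 - #(univ : Finset (Fin k)).offDiag * (s / √n) ≤ 𝔼 σ, exp (g σ) := by
  set P := (univ : Finset (Fin k)).offDiag
  have h_pointwise (σ : Fin k → Fin n → Bool) :
      1 - ∑ p ∈ P, s * |overlap (σ p.1) (σ p.2)| ≤ exp (g σ) := by
    have hq := monotone_id.map_qmax_sub_le_sum σ
    simp only [id, sub_zero] at hq
    rw [← mul_sum]
    linarith [add_one_le_exp (g σ), neg_abs_le (g σ), hg σ, mul_le_mul_of_nonneg_left hq hs]
  calc 1 - #P * (s / √n) = 1 - ∑ p ∈ P, s / √n := by rw [sum_const, nsmul_eq_mul]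
    _ ≤ 1 - ∑ p ∈ P, 𝔼 σ : Fin k → Fin n → Bool, s * |overlap (σ p.1) (σ p.2)| := by
        gcongr with p hp
        rw [← mul_expect, div_eq_mul_inv]
        exact mul_le_mul_of_nonneg_left (expect_abs_overlap_le (mem_offDiag.1 hp).2.2) hs
    _ = 𝔼 σ : Fin k → Fin n → Bool, (1 - ∑ p ∈ P, s * |overlap (σ p.1) (σ p.2)|) := by
        rw [expect_sub_distrib, Fintype.expect_one, expect_sum_comm]
    _ ≤ 𝔼 σ, exp (g σ) := expect_le_expect fun σ _ => h_pointwise σ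

theorem expect_exp_le_one_add (hs : 0 ≤ s) (hg : ∀ σ, |g σ| ≤ s * qmax σ) :
    𝔼 σ, exp (g σ) ≤
      1 + #(univ : Finset (Fin k)).offDiag * (2 * (exp ((s / √n) ^ 2 / 2) - 1) + s / √n) := by
  set P := (univ : Finset (Fin k)).offDiag
  have h_pointwise (σ : Fin k → Fin n → Bool) : exp (g σ) ≤
      1 + ∑ p ∈ P, (2 * (cosh (s * overlap (σ p.1) (σ p.2)) - 1)
        + s * |overlap (σ p.1) (σ p.2)|) := by
    have hexp := (exp_monotone.comp (monotone_mul_left_of_nonneg hs)).map_qmax_sub_le_sum σ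
    simp only [Function.comp_apply, mul_zero, exp_zero] at hexp
    calc exp (g σ) ≤ exp (s * qmax σ) := exp_le_exp.2 (le_of_abs_le (hg σ))
      _ ≤ 1 + ∑ p ∈ P, (exp (s * |overlap (σ p.1) (σ p.2)|) - 1) := by linarith
      _ ≤ _ := by
        gcongr with p
        simpa only [abs_mul, abs_of_nonneg hs] using
          exp_abs_sub_one_le (s * overlap (σ p.1) (σ p.2))
  calc 𝔼 σ, exp (g σ)
      ≤ 𝔼 σ : Fin k → Fin n → Bool, (1 + ∑ p ∈ P, (2 * (cosh (s * overlap (σ p.1) (σ p.2)) - 1)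
          + s * |overlap (σ p.1) (σ p.2)|)) := expect_le_expect fun σ _ => h_pointwise σ
    _ = 1 + ∑ p ∈ P, (2 * (𝔼 σ : Fin k → Fin n → Bool, cosh (s * overlap (σ p.1) (σ p.2)) - 1)
        + s * 𝔼 σ : Fin k → Fin n → Bool, |overlap (σ p.1) (σ p.2)|) := by
        simp only [expect_add_distrib, expect_sum_comm, ← mul_expect, expect_sub_distrib,
          Fintype.expect_one]
    _ ≤ 1 + ∑ p ∈ P, (2 * (exp ((s / √n) ^ 2 / 2) - 1) + s / √n) := by
        gcongr with p hp
        · exact expect_cosh_mul_overlap_le (mem_offDiag.1 hp).2.2 s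
        · rw [div_eq_mul_inv]
          exact mul_le_mul_of_nonneg_left (expect_abs_overlap_le (mem_offDiag.1 hp).2.2) hs
    _ = _ := by rw [sum_const, nsmul_eq_mul]

theorem abs_expect_exp_sub_one_le (hs : 0 ≤ s) (hg : ∀ σ, |g σ| ≤ s * qmax σ) :
    |𝔼 σ, exp (g σ) - 1| ≤ k ^ 2 * (2 * (exp ((s / √n) ^ 2 / 2) - 1) + s / √n) := by
  have hcard : (#(univ : Finset (Fin k)).offDiag : ℝ) ≤ k ^ 2 := by
    rw [offDiag_card, card_univ, Fintype.card_fin, sq]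
    exact_mod_cast Nat.sub_le _ _
  have hu : 0 ≤ s / √n := by positivity
  have hexp : 0 ≤ exp ((s / √n) ^ 2 / 2) - 1 := sub_nonneg.2 (one_le_exp (by positivity))
  have hlower := one_sub_le_expect_exp hs hg
  have hupper := expect_exp_le_one_add hs hg
  rw [abs_sub_le_iff]
  constructor <;> nlinarith [mul_le_mul_of_nonneg_right hcard hu]

end ExpectExp

theorem sum_exp_factor_general (k : ℕ) (c : ℝ) (hc : 0 < c) (α : ℕ → ℝ)
    (hα4 : Tendsto (fun n : ℕ => α n * ((n : ℝ) ^ (-(1 / 4) : ℝ))) atTop (nhds 0))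
    (f : (n : ℕ) → (Fin k → Fin n → Bool) → ℝ)
    (hf : ∀ n (σ : Fin k → Fin n → Bool), |f n σ| ≤ c * (α n) ^ 2 * qmax σ) :
    Tendsto
      (fun n : ℕ =>
        ((2 : ℝ) ^ (n * k))⁻¹ * ∑ σ : Fin k → Fin n → Bool, Real.exp (f n σ))
      atTop (nhds 1) := by
  have h_expect (n : ℕ) : ((2 : ℝ) ^ (n * k))⁻¹ * ∑ σ : Fin k → Fin n → Bool, exp (f n σ)
      = 𝔼 σ, exp (f n σ) := by
    simp [Fintype.expect_eq_sum_div_card, pow_mul, div_eq_inv_mul]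
  have h_scale : Tendsto (fun n : ℕ => c * α n ^ 2 / √n) atTop (𝓝 0) := by
    have h := (hα4.pow 2).const_mul c
    rw [zero_pow two_ne_zero, mul_zero] at h
    refine h.congr fun n => ?_
    have h_rpow : ((n : ℝ) ^ (-(1 / 4) : ℝ)) ^ 2 = (√n)⁻¹ := by
      rw [← rpow_natCast, ← rpow_mul n.cast_nonneg, sqrt_eq_rpow, ← rpow_neg n.cast_nonneg]
      norm_num
    rw [mul_pow, h_rpow, div_eq_mul_inv, mul_assoc]
  have h_bound :
      Tendsto (fun u : ℝ => (k : ℝ) ^ 2 * (2 * (exp (u ^ 2 / 2) - 1) + u)) (𝓝 0) (𝓝 0) := by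
    have h_cont : Continuous fun u : ℝ => (k : ℝ) ^ 2 * (2 * (exp (u ^ 2 / 2) - 1) + u) := by
      fun_prop
    simpa using h_cont.tendsto 0
  simp only [h_expect]
  refine tendsto_iff_norm_sub_tendsto_zero.2 <|
    squeeze_zero (fun _ => norm_nonneg _) (fun n => ?_) (h_bound.comp h_scale)
  exact abs_expect_exp_sub_one_le (by positivity) (hf n)

/-- If `α_n > 0` with `α_n n^{−1/4} → 0` and `|f(σ^(1),…,σ^(k))| ≤ c α_n² q_max`, then
`2^{−nk} ∑_{σ^(1),…,σ^(k)} exp(f) = 1 + o(1)` as `n → ∞`. -/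
theorem sum_exp_factor (k : ℕ) (hk : 0 < k) (c : ℝ) (hc : 0 < c) (α : ℕ → ℝ)
    (hα : ∀ n, 0 < α n)
    (hα4 : Tendsto (fun n : ℕ => α n * ((n : ℝ) ^ (-(1 / 4) : ℝ))) atTop (nhds 0))
    (f : (n : ℕ) → (Fin k → Fin n → Bool) → ℝ)
    (hf : ∀ n (σ : Fin k → Fin n → Bool), |f n σ| ≤ c * (α n) ^ 2 * qmax σ) :
    Tendsto
      (fun n : ℕ =>
        ((2 : ℝ) ^ (n * k))⁻¹ * ∑ σ : Fin k → Fin n → Bool, Real.exp (f n σ))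
      atTop (nhds 1) :=
  sum_exp_factor_general k c hc α hα4 f hf
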